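/- Let V : ℤ^d → ℂ be Γ-periodic and (d₁,…,d_r)-separable, written V(n) = ∑_{j=1}^r V_j(ñ_j) with each V_j periodic. Then for any nonzero l = (l̃₁, 0, …, 0, l̃_r) in the fundamental domain W whose blocks 2 through r-1 vanish, the Fourier coefficient V̂(l) equals the Fourier coefficient of the lower-dimensional function (ñ₁,ñ_r) ↦ V₁(ñ₁) + V_r(ñ_r) at (l̃₁, l̃_r), up to an additive shift of V₁ by the averages of the other components. -/

import Mathlib

open scoped BigOperators

/-- Discrete Fourier transform over the fundamental domain `W = ∏ [0, qⱼ-1]`. -/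
noncomputable def dft {d : ℕ} (q : Fin d → ℕ) (V : (Fin d → ℤ) → ℂ)
    (l : Fin d → ℤ) : ℂ :=
  (1 / ∏ j, (q j : ℂ)) *
    ∑ n : (∀ j, Fin (q j)), V (fun j => ((n j : ℕ) : ℤ)) *
      Complex.exp (-(2 * Real.pi * Complex.I) *
        ∑ j, (l j : ℂ) * ((n j : ℕ) : ℂ) / (q j : ℂ))

/-- The average of `V` over the periodicity cell. -/
noncomputable def avgW {d : ℕ} (q : Fin d → ℕ) (V : (Fin d → ℤ) → ℂ) : ℂ :=
  (1 / ∏ j, (q j : ℂ)) * ∑ n : (∀ j, Fin (q j)), V (fun j => ((n j : ℕ) : ℤ))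

/-- `Γ`-periodicity for `Γ = q₁ℤ ⊕ ⋯ ⊕ q_dℤ`. -/
def IsPeriodic {d : ℕ} (q : Fin d → ℕ) (V : (Fin d → ℤ) → ℂ) : Prop :=
  ∀ (n : Fin d → ℤ) (j : Fin d),
    V (fun i => n i + if i = j then (q i : ℤ) else 0) = V n

/-- `f` depends only on the coordinates in `S`. -/
def DependsOnlyOn {d : ℕ} (S : Set (Fin d)) (f : (Fin d → ℤ) → ℂ) : Prop :=
  ∀ n n' : Fin d → ℤ, (∀ j ∈ S, n j = n' j) → f n = f n'

/-- The offset `d₀ + ⋯ + d_{i-1}` of the `i`-th block. -/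
def blockOffset {r : ℕ} (dv : Fin r → ℕ) (i : Fin r) : ℕ :=
  ∑ j ∈ Finset.Iio i, dv j

/-- The set of coordinate indices lying in the `i`-th block. -/
def blockSet {r d : ℕ} (dv : Fin r → ℕ) (i : Fin r) : Set (Fin d) :=
  {s | blockOffset dv i ≤ (s : ℕ) ∧ (s : ℕ) < blockOffset dv i + dv i}

section MyAux
open Complex

lemma myexp_shift (l q a b : ℕ) (hq : 0 < q) :
    Complex.exp (-(2*Real.pi*Complex.I) * ((l:ℂ) * ((a + q*b : ℕ):ℂ) / (q:ℂ))) =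
    Complex.exp (-(2*Real.pi*Complex.I) * ((l:ℂ) * ((a:ℕ):ℂ) / (q:ℂ))) := by
  have hq0 : (q:ℂ) ≠ 0 := Nat.cast_ne_zero.mpr hq.ne'
  have h1 : Complex.exp (-((l:ℂ)*(b:ℂ)) * (2*(Real.pi:ℂ)*Complex.I)) = 1 := by
    have := Complex.exp_int_mul_two_pi_mul_I (-(l*b : ℤ))
    push_cast at this
    convert this using 2
  rw [show -(2*(Real.pi:ℂ)*Complex.I) * ((l:ℂ) * ((a + q*b : ℕ):ℂ) / (q:ℂ))
      = -(2*(Real.pi:ℂ)*Complex.I) * ((l:ℂ)*((a:ℕ):ℂ)/(q:ℂ)) + (-((l:ℂ)*(b:ℂ))) * (2*(Real.pi:ℂ)*Complex.I) from by push_cast; field_simp; ring,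
    Complex.exp_add, h1, mul_one]

lemma myexp_nat_mod (l q m : ℕ) (hq : 0 < q) :
    Complex.exp (-(2*Real.pi*Complex.I) * ((l:ℂ) * ((m % q : ℕ):ℂ) / (q:ℂ))) =
    Complex.exp (-(2*Real.pi*Complex.I) * ((l:ℂ) * (m:ℂ) / (q:ℂ))) := by
  conv_rhs => rw [show m = m % q + q * (m / q) from (Nat.mod_add_div m q).symm]
  rw [myexp_shift l q (m % q) (m / q) hq]

lemma myexp_step (l q m : ℕ) (hq : 0 < q) :
    Complex.exp (-(2*Real.pi*Complex.I) * ((l:ℂ) * (((m+1) % q : ℕ):ℂ) / (q:ℂ))) =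
    Complex.exp (-(2*Real.pi*Complex.I) * ((l:ℂ) / (q:ℂ))) *
      Complex.exp (-(2*Real.pi*Complex.I) * ((l:ℂ) * (m:ℂ)/(q:ℂ))) := by
  rw [myexp_nat_mod l q (m+1) hq, ← Complex.exp_add]
  congr 1
  push_cast
  ring

lemma myexp_ne_one (l q : ℕ) (hl : l ≠ 0) (hlq : l < q) :
    Complex.exp (-(2*Real.pi*Complex.I) * ((l:ℂ)/(q:ℂ))) ≠ 1 := by
  intro h
  rw [Complex.exp_eq_one_iff] at h
  obtain ⟨k, hk⟩ := h
  have hq0 : (q:ℂ) ≠ 0 := Nat.cast_ne_zero.mpr (by omega)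
  have hπ : (Real.pi:ℂ) ≠ 0 := Complex.ofReal_ne_zero.mpr Real.pi_ne_zero
  have hI := Complex.I_ne_zero
  have hne : (2*(Real.pi:ℂ)*Complex.I) ≠ 0 := by
    simp [Real.pi_ne_zero, Complex.I_ne_zero, hπ]
  have h2 : (2*(Real.pi:ℂ)*Complex.I) * (l:ℂ) = (2*(Real.pi:ℂ)*Complex.I) * ((-k*q : ℤ):ℂ) := by
    field_simp at hk
    push_cast
    linear_combination (-(2*(Real.pi:ℂ)*Complex.I)) * hk
  have h3 : (l:ℤ) = -k*q := by exact_mod_cast mul_left_cancel₀ hne h2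
  have hdvd : (q:ℤ) ∣ (l:ℤ) := ⟨-k, by linarith⟩
  have := Int.le_of_dvd (by exact_mod_cast Nat.pos_of_ne_zero hl) hdvd
  omega

lemma dft_eq_zero_of_indep {d : ℕ} (q : Fin d → ℕ) (hq : ∀ j, 0 < q j)
    (f : (Fin d → ℤ) → ℂ) (l : ∀ j, Fin (q j)) (j0 : Fin d) (hl0 : (l j0 : ℕ) ≠ 0)
    (hf : ∀ n n' : Fin d → ℤ, (∀ j, j ≠ j0 → n j = n' j) → f n = f n') :
    dft q f (fun j => ((l j : ℕ) : ℤ)) = 0 := by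
  haveI : ∀ j, NeZero (q j) := fun j => ⟨(hq j).ne'⟩
  have hq2 : 2 ≤ q j0 := by
    have := (l j0).isLt; omega
  set g : (∀ j, Fin (q j)) → ℂ := fun n =>
    f (fun j => ((n j : ℕ) : ℤ)) *
      Complex.exp (-(2 * Real.pi * Complex.I) *
        ∑ j, ((((l j : ℕ) : ℤ)) : ℂ) * ((n j : ℕ) : ℂ) / (q j : ℂ)) with hg
  suffices hS : ∑ n : (∀ j, Fin (q j)), g n = 0 by
    rw [dft, hS, mul_zero]
  set ω := Complex.exp (-(2*Real.pi*Complex.I) * (((l j0 : ℕ):ℂ)/(q j0 :ℂ))) with hω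
  have hωne : ω ≠ 1 := myexp_ne_one _ _ hl0 (l j0).isLt
  let e : (∀ j, Fin (q j)) ≃ (∀ j, Fin (q j)) :=
    Equiv.piCongrRight fun j => Equiv.addRight (if j = j0 then 1 else 0)
  have hcoord : ∀ n (j : Fin d), e n j = n j + (if j = j0 then 1 else 0) := fun n j => rfl
  have hkey : ∀ n, g (e n) = ω * g n := by
    intro n
    have hval : ((e n j0 : Fin (q j0)) : ℕ) = ((n j0 : ℕ) + 1) % q j0 := by
      rw [hcoord, if_pos rfl, Fin.val_add]
      congr 2
      rw [Fin.val_one']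
      exact Nat.mod_eq_of_lt hq2
    have hfpart : f (fun j => ((e n j : ℕ) : ℤ)) = f (fun j => ((n j : ℕ) : ℤ)) := by
      apply hf
      intro j hj
      rw [hcoord, if_neg hj, add_zero]
    have hA : ∑ j, ((((l j : ℕ) : ℤ)) : ℂ) * ((e n j : ℕ) : ℂ) / (q j : ℂ)
        = (∑ j, ((((l j : ℕ) : ℤ)) : ℂ) * ((n j : ℕ) : ℂ) / (q j : ℂ))
          + (((l j0 : ℕ):ℂ) * ((((n j0 : ℕ) + 1) % q j0 : ℕ) : ℂ) / (q j0 : ℂ)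
             - ((l j0 : ℕ):ℂ) * ((n j0 : ℕ) : ℂ) / (q j0 : ℂ)) := by
      have hA' : (∑ j, ((((l j : ℕ) : ℤ)) : ℂ) * ((e n j : ℕ) : ℂ) / (q j : ℂ))
          - (∑ j, ((((l j : ℕ) : ℤ)) : ℂ) * ((n j : ℕ) : ℂ) / (q j : ℂ))
          = ((l j0 : ℕ):ℂ) * ((((n j0 : ℕ) + 1) % q j0 : ℕ) : ℂ) / (q j0 : ℂ)
             - ((l j0 : ℕ):ℂ) * ((n j0 : ℕ) : ℂ) / (q j0 : ℂ) := by
        rw [← Finset.sum_sub_distrib]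
        rw [Finset.sum_eq_single j0]
        · rw [hval]; push_cast; ring
        · intro b _ hb
          rw [hcoord, if_neg hb, add_zero, sub_self]
        · simp
      rw [← hA', add_sub_cancel]
    rw [hg]
    simp only
    rw [hfpart, hA]
    have hstep := myexp_step (l j0 : ℕ) (q j0) (n j0 : ℕ) (hq j0)
    rw [show -(2 * (Real.pi:ℂ) * Complex.I) *
        ((∑ j, ((((l j : ℕ) : ℤ)) : ℂ) * ((n j : ℕ) : ℂ) / (q j : ℂ))
          + (((l j0 : ℕ):ℂ) * ((((n j0 : ℕ) + 1) % q j0 : ℕ) : ℂ) / (q j0 : ℂ)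
             - ((l j0 : ℕ):ℂ) * ((n j0 : ℕ) : ℂ) / (q j0 : ℂ)))
      = (-(2 * (Real.pi:ℂ) * Complex.I) * (∑ j, ((((l j : ℕ) : ℤ)) : ℂ) * ((n j : ℕ) : ℂ) / (q j : ℂ))
          + -(2 * (Real.pi:ℂ) * Complex.I) * (((l j0 : ℕ):ℂ) * ((((n j0 : ℕ) + 1) % q j0 : ℕ) : ℂ) / (q j0 : ℂ)))
          - -(2 * (Real.pi:ℂ) * Complex.I) * (((l j0 : ℕ):ℂ) * ((n j0 : ℕ) : ℂ) / (q j0 : ℂ)) from by ring]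
    rw [Complex.exp_sub, Complex.exp_add, hstep, ← hω]
    have hne := Complex.exp_ne_zero (-(2 * (Real.pi:ℂ) * Complex.I) * (((l j0 : ℕ):ℂ) * ((n j0 : ℕ) : ℂ) / (q j0 : ℂ)))
    field_simp
  have hsum : ∑ n, g n = ω * ∑ n, g n := by
    conv_lhs => rw [← Equiv.sum_comp e g]
    rw [Finset.mul_sum]
    exact Finset.sum_congr rfl fun n _ => hkey n
  have : (ω - 1) * ∑ n, g n = 0 := by
    rw [sub_mul, one_mul, ← hsum, sub_self]
  rcases mul_eq_zero.mp this with h | h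
  · exact absurd (sub_eq_zero.mp h) hωne
  · exact h

lemma dft_sum {d : ℕ} (q : Fin d → ℕ) {ι : Type*} (s : Finset ι)
    (F : ι → (Fin d → ℤ) → ℂ) (l : Fin d → ℤ) :
    dft q (fun n => ∑ i ∈ s, F i n) l = ∑ i ∈ s, dft q (F i) l := by
  unfold dft
  simp only [Finset.sum_mul]
  rw [Finset.sum_comm, Finset.mul_sum]

lemma dft_add {d : ℕ} (q : Fin d → ℕ) (f g : (Fin d → ℤ) → ℂ) (l : Fin d → ℤ) :
    dft q (fun n => f n + g n) l = dft q f l + dft q g l := by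
  unfold dft
  rw [← mul_add, ← Finset.sum_add_distrib]
  simp only [add_mul]

end MyAux

/-- For a `(d₁,…,d_r)`-separable periodic `V = ∑ⱼ Vⱼ(ñⱼ)`, and any nonzero `l ∈ W`
whose blocks `2,…,r-1` all vanish, `V̂(l)` equals the Fourier coefficient at `l` of
`Ṽ₁(ñ₁,ñ_r) = V₁(ñ₁) + V_r(ñ_r) + ∑_{j=2}^{r-1}[Vⱼ]` (the averages of the middle
components being additive constants). -/

theorem dft_blockSep_middle_zero {r d : ℕ} (dv : Fin r → ℕ) (hr : 2 ≤ r)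
    (hdv : ∀ j, 1 ≤ dv j) (hd : d = ∑ j, dv j)
    (q : Fin d → ℕ) (hq : ∀ j, 0 < q j)
    (V : (Fin d → ℤ) → ℂ) (Vb : Fin r → (Fin d → ℤ) → ℂ)
    (hVb : ∀ i, DependsOnlyOn (blockSet dv i) (Vb i))
    (hVbper : ∀ i, IsPeriodic q (Vb i))
    (hsum : ∀ n, V n = ∑ i, Vb i n)
    (l : ∀ j, Fin (q j)) (hl : ∃ j, (l j : ℕ) ≠ 0)
    (hlmid : ∀ i : Fin r, i ≠ ⟨0, by omega⟩ → i ≠ ⟨r - 1, by omega⟩ →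
      ∀ s : Fin d, s ∈ blockSet dv i → (l s : ℕ) = 0) :
    dft q V (fun j => ((l j : ℕ) : ℤ)) =
      dft q
        (fun n => Vb ⟨0, by omega⟩ n + Vb ⟨r - 1, by omega⟩ n +
          ∑ i ∈ Finset.univ \ {(⟨0, by omega⟩ : Fin r), ⟨r - 1, by omega⟩},
            avgW q (Vb i))
        (fun j => ((l j : ℕ) : ℤ)) := by
  classical
  obtain ⟨j0, hj0⟩ := hl
  have h0r : 0 < r := by omega
  set i0 : Fin r := ⟨0, h0r⟩ with hi0
  set ir : Fin r := ⟨r - 1, by omega⟩ with hir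
  set L : Fin d → ℤ := fun j => ((l j : ℕ) : ℤ) with hL
  -- middle components contribute zero
  have hmid : ∀ i : Fin r, i ≠ i0 → i ≠ ir → dft q (Vb i) L = 0 := by
    intro i h1 h2
    apply dft_eq_zero_of_indep q hq _ l j0 hj0
    intro n n' hnn'
    apply hVb i
    intro s hs
    apply hnn'
    rintro rfl
    exact hj0 (hlmid i h1 h2 _ hs)
  -- constant contributes zero
  set C : ℂ := ∑ i ∈ Finset.univ \ {i0, ir}, avgW q (Vb i) with hC
  have hconst : dft q (fun _ => C) L = 0 :=
    dft_eq_zero_of_indep q hq _ l j0 hj0 (fun n n' _ => rfl)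
  -- left side
  have hVeq : V = fun n => ∑ i, Vb i n := funext hsum
  rw [hVeq]
  rw [dft_sum q Finset.univ Vb L]
  -- split the universal sum
  have hne : i0 ≠ ir := by
    intro h
    have h2 := congrArg Fin.val h
    simp only [hi0, hir] at h2
    omega
  have hsub : ({i0, ir} : Finset (Fin r)) ⊆ Finset.univ := Finset.subset_univ _
  rw [← Finset.sum_sdiff hsub]
  have hz : ∑ i ∈ Finset.univ \ {i0, ir}, dft q (Vb i) L = 0 := by
    apply Finset.sum_eq_zero
    intro i hi
    rw [Finset.mem_sdiff, Finset.mem_insert, Finset.mem_singleton] at hi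
    push_neg at hi
    exact hmid i hi.2.1 hi.2.2
  rw [hz, zero_add, Finset.sum_pair hne]
  -- right side
  rw [show (fun n => Vb i0 n + Vb ir n + C) = (fun n => (fun m => Vb i0 m + Vb ir m) n + (fun _ => C) n) from rfl]
  rw [dft_add q (fun m => Vb i0 m + Vb ir m) (fun _ => C) L, dft_add q (Vb i0) (Vb ir) L, hconst, add_zero]
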